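/- arXiv:2203.11735 — 3 statements merged into one kernel-verified Lean document; each statement's English description precedes it below -/
import Mathlib

section
/- In a mixed Galerkin setup, let κ₁, κ₂ : Ω → ℝ be measurable coefficients bounded below by positive constants a.e., and let f ∈ L²(Ω). Suppose (u₁,p₁) ∈ V × Q is a mixed Galerkin solution for (κ₁,f) and (u₂,p₂) ∈ V × Q is a mixed Galerkin solution for (κ₂,f), both with respect to the same spaces V, Q. Then the cross-symmetry identities ∫_Ω κ₂⁻¹ u₂·u₁ dμ = ∫_Ω κ₂⁻¹ |u₂|² dμ and ∫_Ω κ₁⁻¹ u₁·u₂ dμ = ∫_Ω κ₁⁻¹ |u₁|² dμ hold. -/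
open MeasureTheory RealInnerProductSpace

noncomputable section

/-- A mixed Galerkin setup: a velocity subspace `V ⊆ L²(Ω;ℝᵈ)`, a pressure subspace
`Q ⊆ L²(Ω)`, and a linear discrete divergence `D : V → L²(Ω)` with range contained in `Q`. -/
structure MixedGalerkinSetup {Ω : Type*} [MeasurableSpace Ω] (μ : Measure Ω) (d : ℕ) where
  V : Submodule ℝ (Lp (EuclideanSpace ℝ (Fin d)) 2 μ)
  Q : Submodule ℝ (Lp ℝ 2 μ)
  D : V →ₗ[ℝ] Lp ℝ 2 μ
  D_mem_Q : ∀ v : V, D v ∈ Q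

/-- `(u, p) ∈ V × Q` is a mixed Galerkin solution for the coefficient `κ` and source `f`:
`∫ κ⁻¹ u·v − ∫ (Dv) p = 0` for all `v ∈ V` and `∫ (Du) q = ∫ f q` for all `q ∈ Q`. -/
def IsMGSolution {Ω : Type*} [MeasurableSpace Ω] {μ : Measure Ω} {d : ℕ}
    (S : MixedGalerkinSetup μ d) (κ : Ω → ℝ) (f : Lp ℝ 2 μ)
    (u : S.V) (p : S.Q) : Prop :=
  (∀ v : S.V,
      ∫ x, (κ x)⁻¹ * ⟪(u : Lp (EuclideanSpace ℝ (Fin d)) 2 μ) x,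
          (v : Lp (EuclideanSpace ℝ (Fin d)) 2 μ) x⟫ ∂μ
        - ∫ x, (S.D v) x * (p : Lp ℝ 2 μ) x ∂μ = 0) ∧
  (∀ q : S.Q, ∫ x, (S.D u) x * (q : Lp ℝ 2 μ) x ∂μ = ∫ x, f x * (q : Lp ℝ 2 μ) x ∂μ)

namespace IsMGSolution

variable {Ω : Type*} [MeasurableSpace Ω] {μ : Measure Ω} {d : ℕ} {S : MixedGalerkinSetup μ d}
  {κ κ' : Ω → ℝ} {f : Lp ℝ 2 μ} {u w : S.V} {p p' : S.Q}

theorem integral_inner_eq_integral_div_mul (hsol : IsMGSolution S κ f u p) (v : S.V) :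
    ∫ x, (κ x)⁻¹ * ⟪(u : Lp (EuclideanSpace ℝ (Fin d)) 2 μ) x,
        (v : Lp (EuclideanSpace ℝ (Fin d)) 2 μ) x⟫ ∂μ
      = ∫ x, (S.D v) x * (p : Lp ℝ 2 μ) x ∂μ :=
  sub_eq_zero.mp (hsol.1 v)

theorem integral_div_mul_eq (hsol : IsMGSolution S κ f u p) (hsol' : IsMGSolution S κ' f w p')
    (q : S.Q) :
    ∫ x, (S.D w) x * (q : Lp ℝ 2 μ) x ∂μ = ∫ x, (S.D u) x * (q : Lp ℝ 2 μ) x ∂μ := by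
  rw [hsol.2 q, hsol'.2 q]

/-- Testing the flux equation of `(u, p)` with `w` only sees `D w` against `p`, and solutions for
the same source have the same discrete divergence against `Q`, so `w` may be replaced by `u`. -/
theorem integral_inner_eq_integral_norm_sq (hsol : IsMGSolution S κ f u p)
    (hsol' : IsMGSolution S κ' f w p') :
    ∫ x, (κ x)⁻¹ * ⟪(u : Lp (EuclideanSpace ℝ (Fin d)) 2 μ) x,
        (w : Lp (EuclideanSpace ℝ (Fin d)) 2 μ) x⟫ ∂μ
      = ∫ x, (κ x)⁻¹ * ‖(u : Lp (EuclideanSpace ℝ (Fin d)) 2 μ) x‖ ^ 2 ∂μ := by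
  simp_rw [← real_inner_self_eq_norm_sq]
  rw [hsol.integral_inner_eq_integral_div_mul, hsol.integral_inner_eq_integral_div_mul,
    hsol.integral_div_mul_eq hsol']

end IsMGSolution

theorem stmt3_general {Ω : Type*} [MeasurableSpace Ω] {μ : Measure Ω} {d : ℕ}
    (S : MixedGalerkinSetup μ d)
    (κ₁ κ₂ : Ω → ℝ)
    (f : Lp ℝ 2 μ) (u₁ : S.V) (p₁ : S.Q) (u₂ : S.V) (p₂ : S.Q)
    (hsol₁ : IsMGSolution S κ₁ f u₁ p₁) (hsol₂ : IsMGSolution S κ₂ f u₂ p₂) :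
    (∫ x, (κ₂ x)⁻¹ * ⟪(u₂ : Lp (EuclideanSpace ℝ (Fin d)) 2 μ) x,
        (u₁ : Lp (EuclideanSpace ℝ (Fin d)) 2 μ) x⟫ ∂μ
      = ∫ x, (κ₂ x)⁻¹ * ‖(u₂ : Lp (EuclideanSpace ℝ (Fin d)) 2 μ) x‖ ^ 2 ∂μ) ∧
    (∫ x, (κ₁ x)⁻¹ * ⟪(u₁ : Lp (EuclideanSpace ℝ (Fin d)) 2 μ) x,
        (u₂ : Lp (EuclideanSpace ℝ (Fin d)) 2 μ) x⟫ ∂μ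
      = ∫ x, (κ₁ x)⁻¹ * ‖(u₁ : Lp (EuclideanSpace ℝ (Fin d)) 2 μ) x‖ ^ 2 ∂μ) :=
  ⟨hsol₂.integral_inner_eq_integral_norm_sq hsol₁, hsol₁.integral_inner_eq_integral_norm_sq hsol₂⟩

/-- cross-symmetry identities: if `(u₁,p₁)` solves for `(κ₁,f)` and
`(u₂,p₂)` solves for `(κ₂,f)` in the same spaces, then
`∫ κ₂⁻¹ u₂·u₁ = ∫ κ₂⁻¹ |u₂|²` and `∫ κ₁⁻¹ u₁·u₂ = ∫ κ₁⁻¹ |u₁|²`. -/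
theorem stmt3 {Ω : Type*} [MeasurableSpace Ω] {μ : Measure Ω} {d : ℕ}
    (S : MixedGalerkinSetup μ d)
    (κ₁ κ₂ : Ω → ℝ) (hκ₁ : Measurable κ₁) (hκ₂ : Measurable κ₂)
    (κ₁_min κ₂_min : ℝ) (hκ₁_min : 0 < κ₁_min) (hκ₂_min : 0 < κ₂_min)
    (hκ₁_ae : ∀ᵐ x ∂μ, κ₁_min ≤ κ₁ x) (hκ₂_ae : ∀ᵐ x ∂μ, κ₂_min ≤ κ₂ x)
    (f : Lp ℝ 2 μ) (u₁ : S.V) (p₁ : S.Q) (u₂ : S.V) (p₂ : S.Q)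
    (hsol₁ : IsMGSolution S κ₁ f u₁ p₁) (hsol₂ : IsMGSolution S κ₂ f u₂ p₂) :
    (∫ x, (κ₂ x)⁻¹ * ⟪(u₂ : Lp (EuclideanSpace ℝ (Fin d)) 2 μ) x,
        (u₁ : Lp (EuclideanSpace ℝ (Fin d)) 2 μ) x⟫ ∂μ
      = ∫ x, (κ₂ x)⁻¹ * ‖(u₂ : Lp (EuclideanSpace ℝ (Fin d)) 2 μ) x‖ ^ 2 ∂μ) ∧
    (∫ x, (κ₁ x)⁻¹ * ⟪(u₁ : Lp (EuclideanSpace ℝ (Fin d)) 2 μ) x,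
        (u₂ : Lp (EuclideanSpace ℝ (Fin d)) 2 μ) x⟫ ∂μ
      = ∫ x, (κ₁ x)⁻¹ * ‖(u₁ : Lp (EuclideanSpace ℝ (Fin d)) 2 μ) x‖ ^ 2 ∂μ) :=
  stmt3_general S κ₁ κ₂ f u₁ p₁ u₂ p₂ hsol₁ hsol₂
end
end

section
/- Let u₁, u₂ ∈ L²(Ω;ℝᵈ) and let κ₁, κ₂ : Ω → ℝ be measurable with κᵢ ≥ κ_min > 0 almost everywhere (i = 1,2). If ∫_Ω κ₂⁻¹ u₂·u₁ dμ = ∫_Ω κ₂⁻¹ |u₂|² dμ and ∫_Ω κ₁⁻¹ u₁·u₂ dμ = ∫_Ω κ₁⁻¹ |u₁|² dμ, then ∫_Ω |κ₁^{-1/2} u₁ − κ₂^{-1/2} u₂|² dμ = ∫_Ω (κ₁^{-1/2} − κ₂^{-1/2})² (u₁·u₂) dμ. -/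
/-! Writing `a = κ₁^{-1/2}`, `b = κ₂^{-1/2}`, pointwise
`|a u₁ - b u₂|² = (a - b)² u₁·u₂ + a² (|u₁|² - u₁·u₂) + b² (|u₂|² - u₂·u₁)`,
and the two hypotheses say exactly that the last two terms integrate to zero. All three terms
are integrable because `a` and `b` are essentially bounded (`κᵢ ≥ κ_min > 0`) and `u₁·u₂` is. -/

open MeasureTheory RealInnerProductSpace
open scoped ENNReal

section WeightedL2

variable {Ω E : Type*} [MeasurableSpace Ω] {μ : Measure Ω}
  [NormedAddCommGroup E] [InnerProductSpace ℝ E]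

theorem norm_smul_sub_smul_sq_eq (a b : ℝ) (u v : E) :
    ‖a • u - b • v‖ ^ 2 = (a - b) ^ 2 * ⟪u, v⟫
      + (a ^ 2 * ‖u‖ ^ 2 - a ^ 2 * ⟪u, v⟫) + (b ^ 2 * ‖v‖ ^ 2 - b ^ 2 * ⟪v, u⟫) := by
  rw [norm_sub_sq_real, norm_smul, norm_smul, real_inner_smul_left, real_inner_smul_right,
    real_inner_comm v u, Real.norm_eq_abs, Real.norm_eq_abs, mul_pow, mul_pow, sq_abs, sq_abs]
  ring

theorem integrable_mul_inner_of_memLp_top {c : Ω → ℝ} (hc : MemLp c ∞ μ) (u v : Lp E 2 μ) :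
    Integrable (fun x ↦ c x * ⟪u x, v x⟫) μ :=
  (L2.integrable_inner (𝕜 := ℝ) u v).mul_of_top_right hc

theorem integrable_mul_norm_sq_of_memLp_top {c : Ω → ℝ} (hc : MemLp c ∞ μ) (u : Lp E 2 μ) :
    Integrable (fun x ↦ c x * ‖u x‖ ^ 2) μ := by
  simpa only [real_inner_self_eq_norm_sq] using integrable_mul_inner_of_memLp_top hc u u

theorem integral_norm_smul_sub_smul_sq_eq {a b : Ω → ℝ} (ha : MemLp a ∞ μ) (hb : MemLp b ∞ μ)
    (u v : Lp E 2 μ)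
    (hu : ∫ x, a x ^ 2 * ⟪u x, v x⟫ ∂μ = ∫ x, a x ^ 2 * ‖u x‖ ^ 2 ∂μ)
    (hv : ∫ x, b x ^ 2 * ⟪v x, u x⟫ ∂μ = ∫ x, b x ^ 2 * ‖v x‖ ^ 2 ∂μ) :
    ∫ x, ‖a x • u x - b x • v x‖ ^ 2 ∂μ = ∫ x, (a x - b x) ^ 2 * ⟪u x, v x⟫ ∂μ := by
  have ha2 : MemLp (fun x ↦ a x ^ 2) ∞ μ := by simpa only [sq] using ha.mul' ha
  have hb2 : MemLp (fun x ↦ b x ^ 2) ∞ μ := by simpa only [sq] using hb.mul' hb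
  have hab2 : MemLp (fun x ↦ (a x - b x) ^ 2) ∞ μ := by
    simpa only [sq, Pi.sub_apply] using (ha.sub hb).mul' (ha.sub hb)
  have hI := integrable_mul_inner_of_memLp_top hab2 u v
  have hau := integrable_mul_norm_sq_of_memLp_top ha2 u
  have hauv := integrable_mul_inner_of_memLp_top ha2 u v
  have hbv := integrable_mul_norm_sq_of_memLp_top hb2 v
  have hbvu := integrable_mul_inner_of_memLp_top hb2 v u
  have hU : ∫ x, (a x ^ 2 * ‖u x‖ ^ 2 - a x ^ 2 * ⟪u x, v x⟫) ∂μ = 0 := by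
    rw [integral_sub hau hauv, hu, sub_self]
  have hV : ∫ x, (b x ^ 2 * ‖v x‖ ^ 2 - b x ^ 2 * ⟪v x, u x⟫) ∂μ = 0 := by
    rw [integral_sub hbv hbvu, hv, sub_self]
  simp_rw [norm_smul_sub_smul_sq_eq]
  rw [integral_add (hI.fun_add (hau.sub' hauv)) (hbv.sub' hbvu), integral_add hI (hau.sub' hauv),
    hU, hV, add_zero, add_zero]

theorem memLp_top_inv_sqrt {κ : Ω → ℝ} (hκ : AEMeasurable κ μ) {c : ℝ} (hc : 0 < c)
    (hκc : ∀ᵐ x ∂μ, c ≤ κ x) :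
    MemLp (fun x ↦ (√(κ x))⁻¹) ∞ μ := by
  refine memLp_top_of_bound (hκ.sqrt.inv).aestronglyMeasurable (√c)⁻¹ ?_
  filter_upwards [hκc] with x hx
  rw [Real.norm_of_nonneg (inv_nonneg.2 (Real.sqrt_nonneg _))]
  exact inv_anti₀ (Real.sqrt_pos.2 hc) (Real.sqrt_le_sqrt hx)

theorem integral_inv_sqrt_sq_mul {κ : Ω → ℝ} (hκ : ∀ᵐ x ∂μ, 0 ≤ κ x) (f : Ω → ℝ) :
    ∫ x, (√(κ x))⁻¹ ^ 2 * f x ∂μ = ∫ x, (κ x)⁻¹ * f x ∂μ := by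
  refine integral_congr_ae ?_
  filter_upwards [hκ] with x hx
  rw [inv_pow, Real.sq_sqrt hx]

end WeightedL2

/-- if `∫ κ₂⁻¹ u₂·u₁ = ∫ κ₂⁻¹ |u₂|²` and `∫ κ₁⁻¹ u₁·u₂ = ∫ κ₁⁻¹ |u₁|²`, then
`∫ |κ₁^{-1/2} u₁ − κ₂^{-1/2} u₂|² dμ = ∫ (κ₁^{-1/2} − κ₂^{-1/2})² (u₁·u₂) dμ`. -/
theorem stmt4 {Ω : Type*} [MeasurableSpace Ω] {μ : Measure Ω} {d : ℕ}
    (u₁ u₂ : Lp (EuclideanSpace ℝ (Fin d)) 2 μ)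
    (κ₁ κ₂ : Ω → ℝ) (hκ₁ : Measurable κ₁) (hκ₂ : Measurable κ₂)
    (κ_min : ℝ) (hκ_min : 0 < κ_min)
    (hκ₁_ae : ∀ᵐ x ∂μ, κ_min ≤ κ₁ x) (hκ₂_ae : ∀ᵐ x ∂μ, κ_min ≤ κ₂ x)
    (h₂ : ∫ x, (κ₂ x)⁻¹ * ⟪u₂ x, u₁ x⟫ ∂μ = ∫ x, (κ₂ x)⁻¹ * ‖u₂ x‖ ^ 2 ∂μ)
    (h₁ : ∫ x, (κ₁ x)⁻¹ * ⟪u₁ x, u₂ x⟫ ∂μ = ∫ x, (κ₁ x)⁻¹ * ‖u₁ x‖ ^ 2 ∂μ) :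
    ∫ x, ‖(Real.sqrt (κ₁ x))⁻¹ • u₁ x - (Real.sqrt (κ₂ x))⁻¹ • u₂ x‖ ^ 2 ∂μ
      = ∫ x, ((Real.sqrt (κ₁ x))⁻¹ - (Real.sqrt (κ₂ x))⁻¹) ^ 2 * ⟪u₁ x, u₂ x⟫ ∂μ := by
  have hκ₁_nonneg : ∀ᵐ x ∂μ, 0 ≤ κ₁ x := hκ₁_ae.mono fun x hx ↦ hκ_min.le.trans hx
  have hκ₂_nonneg : ∀ᵐ x ∂μ, 0 ≤ κ₂ x := hκ₂_ae.mono fun x hx ↦ hκ_min.le.trans hx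
  refine integral_norm_smul_sub_smul_sq_eq (memLp_top_inv_sqrt hκ₁.aemeasurable hκ_min hκ₁_ae)
    (memLp_top_inv_sqrt hκ₂.aemeasurable hκ_min hκ₂_ae) u₁ u₂ ?_ ?_
  · simpa only [integral_inv_sqrt_sq_mul hκ₁_nonneg] using h₁
  · simpa only [integral_inv_sqrt_sq_mul hκ₂_nonneg] using h₂
end

section
/- (Theorem 4.3, abstract form.) In a mixed Galerkin setup satisfying the inf-sup condition with constant C_is > 0, let κ : Ω → ℝ be measurable with κ ≥ κ_min > 0 a.e., let f₁, f₂ ∈ L²(Ω), and let (u₁,p₁), (u₂,p₂) ∈ V × Q be mixed Galerkin solutions for (κ,f₁) and (κ,f₂) respectively, with respect to the same spaces V, Q. Then ‖u₁ − u₂‖_{κ⁻¹,Ω} ≤ C_is · κ_min^{-1/2} · ‖f₁ − f₂‖_{L²(Ω)}, where ‖w‖²_{κ⁻¹,Ω} := ∫_Ω κ⁻¹ |w|² dμ. (Applied with the fine spaces V_f, Q_f this bounds the term e₂, and with the multiscale spaces V_ms, Q_ms and the multiscale inf-sup constant C_infsup it bounds the term e₄.) -/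
/-!
Write `e = u₁ - u₂`, `r = p₁ - p₂`; subtracting the two Galerkin systems, `(e, r)` solves the
system with source `f₁ - f₂`. Testing its first equation with `e` and its second with `r` gives
`‖e‖²_{κ⁻¹} = ⟪f₁ - f₂, r⟫ ≤ ‖f₁ - f₂‖ ‖r‖`. For every `v ∈ V` the first equation and
Cauchy–Schwarz for the weighted inner product give `⟪Dv, r⟫ ≤ ‖e‖_{κ⁻¹} κ_min^{-1/2} ‖v‖`, so the
inf-sup condition bounds `‖r‖ ≤ C_is κ_min^{-1/2} ‖e‖_{κ⁻¹}`; dividing by `‖e‖_{κ⁻¹}` concludes.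
The weighted inner product is the `L²` inner product after multiplication by `√κ⁻¹ ∈ L^∞`.
-/

open MeasureTheory RealInnerProductSpace

noncomputable section

namespace MeasureTheory.L2

variable {Ω : Type*} [MeasurableSpace Ω] {μ : Measure Ω}

theorem integral_mul_eq_inner (f g : Lp ℝ 2 μ) : ∫ x, f x * g x ∂μ = ⟪f, g⟫ := by
  simp only [inner_def, Real.inner_apply]

variable {E : Type*} [NormedAddCommGroup E] [InnerProductSpace ℝ E]

open scoped ENNReal in
theorem exists_clm_inner_eq_integral_weight {w : Ω → ℝ} (hw : AEStronglyMeasurable w μ)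
    {c : ℝ} (hw0 : ∀ᵐ x ∂μ, 0 ≤ w x) (hwc : ∀ᵐ x ∂μ, w x ≤ c) :
    ∃ T : Lp E 2 μ →L[ℝ] Lp E 2 μ, ∀ f g, ⟪T f, T g⟫ = ∫ x, w x * ⟪f x, g x⟫ ∂μ := by
  have hm : MemLp (fun x => √(w x)) ∞ μ := by
    refine memLp_top_of_bound (Real.continuous_sqrt.comp_aestronglyMeasurable hw) √c ?_
    filter_upwards [hwc] with x hx
    rw [Real.norm_of_nonneg (Real.sqrt_nonneg _)]
    exact Real.sqrt_le_sqrt hx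
  refine ⟨(ContinuousLinearMap.lsmul ℝ ℝ).holderL μ ∞ 2 2 hm.toLp, fun f g => ?_⟩
  rw [inner_def]
  refine integral_congr_ae ?_
  filter_upwards [(ContinuousLinearMap.lsmul ℝ ℝ).coeFn_holder (r := 2) hm.toLp f,
    (ContinuousLinearMap.lsmul ℝ ℝ).coeFn_holder (r := 2) hm.toLp g, hm.coeFn_toLp, hw0]
    with x hf hg hmx h0
  simp only [ContinuousLinearMap.holderL_apply_apply, hf, hg, hmx, ContinuousLinearMap.lsmul_apply,
    real_inner_smul_left, real_inner_smul_right, ← mul_assoc, Real.mul_self_sqrt h0]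

theorem integral_norm_sq_eq (f : Lp E 2 μ) : ∫ x, ‖f x‖ ^ 2 ∂μ = ‖f‖ ^ 2 := by
  rw [← real_inner_self_eq_norm_sq f, inner_def]
  exact integral_congr_ae (ae_of_all _ fun x => (real_inner_self_eq_norm_sq _).symm)

theorem integral_weight_norm_sq_le {w : Ω → ℝ} (hw : AEStronglyMeasurable w μ)
    {c : ℝ} (hw0 : ∀ᵐ x ∂μ, 0 ≤ w x) (hwc : ∀ᵐ x ∂μ, w x ≤ c) (f : Lp E 2 μ) :
    ∫ x, w x * ‖f x‖ ^ 2 ∂μ ≤ c * ‖f‖ ^ 2 := by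
  have hf2 : Integrable (fun x => ‖f x‖ ^ 2) μ := by
    simpa only [real_inner_self_eq_norm_sq] using integrable_inner (𝕜 := ℝ) f f
  rw [← integral_norm_sq_eq, ← integral_const_mul]
  refine integral_mono_ae (hf2.bdd_mul hw (c := c) ?_) (hf2.const_mul c) ?_
  · filter_upwards [hw0, hwc] with x h0 hx
    rwa [Real.norm_of_nonneg h0]
  · filter_upwards [hwc] with x hx
    exact mul_le_mul_of_nonneg_right hx (sq_nonneg _)

theorem norm_eq_sqrt_integral_weight {w : Ω → ℝ} {F : Type*} [NormedAddCommGroup F]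
    [InnerProductSpace ℝ F] {T : Lp E 2 μ → F}
    (hT : ∀ f g, ⟪T f, T g⟫ = ∫ x, w x * ⟪f x, g x⟫ ∂μ) (f : Lp E 2 μ) :
    ‖T f‖ = √(∫ x, w x * ‖f x‖ ^ 2 ∂μ) := by
  rw [← Real.sqrt_sq (norm_nonneg (T f)), ← real_inner_self_eq_norm_sq, hT]
  simp only [real_inner_self_eq_norm_sq]

theorem norm_le_of_inner_eq_integral_weight {w : Ω → ℝ} (hw : AEStronglyMeasurable w μ)
    {c : ℝ} (hw0 : ∀ᵐ x ∂μ, 0 ≤ w x) (hwc : ∀ᵐ x ∂μ, w x ≤ c) {F : Type*}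
    [NormedAddCommGroup F] [InnerProductSpace ℝ F] {T : Lp E 2 μ → F}
    (hT : ∀ f g, ⟪T f, T g⟫ = ∫ x, w x * ⟪f x, g x⟫ ∂μ) (f : Lp E 2 μ) :
    ‖T f‖ ≤ √c * ‖f‖ := by
  rw [norm_eq_sqrt_integral_weight hT, ← Real.sqrt_sq (norm_nonneg f),
    ← Real.sqrt_mul' _ (sq_nonneg _)]
  exact Real.sqrt_le_sqrt (integral_weight_norm_sq_le hw hw0 hwc f)

end MeasureTheory.L2

namespace MixedGalerkinSetup

variable {Ω : Type*} [MeasurableSpace Ω] {μ : Measure Ω} {d : ℕ}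

def InfSup (S : MixedGalerkinSetup μ d) (C : ℝ) : Prop :=
  ∀ q : Lp ℝ 2 μ, q ∈ S.Q →
    ‖q‖ ≤ C * ⨆ v : {v : S.V // v ≠ 0},
      (∫ x, (S.D v.1) x * q x ∂μ) /
        Real.sqrt (‖(v.1 : Lp (EuclideanSpace ℝ (Fin d)) 2 μ)‖ ^ 2 + ‖S.D v.1‖ ^ 2)

theorem InfSup.norm_le {S : MixedGalerkinSetup μ d} {C : ℝ} (hS : S.InfSup C) (hC : 0 ≤ C)
    {q : Lp ℝ 2 μ} (hq : q ∈ S.Q) {B : ℝ} (hB : 0 ≤ B)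
    (hbound : ∀ v : S.V, ⟪S.D v, q⟫ ≤ B * ‖(v : Lp (EuclideanSpace ℝ (Fin d)) 2 μ)‖) :
    ‖q‖ ≤ C * B := by
  refine (hS q hq).trans (mul_le_mul_of_nonneg_left (Real.iSup_le (fun v => ?_) hB) hC)
  have hv : ‖(v.1 : Lp (EuclideanSpace ℝ (Fin d)) 2 μ)‖
      ≤ √(‖(v.1 : Lp (EuclideanSpace ℝ (Fin d)) 2 μ)‖ ^ 2 + ‖S.D v.1‖ ^ 2) :=
    Real.le_sqrt_of_sq_le (le_add_of_nonneg_right (sq_nonneg _))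
  rw [L2.integral_mul_eq_inner]
  exact div_le_of_le_mul₀ (Real.sqrt_nonneg _) hB
    ((hbound v.1).trans (mul_le_mul_of_nonneg_left hv hB))

theorem norm_le_of_infSup {H : Type*} [NormedAddCommGroup H] [InnerProductSpace ℝ H]
    (S : MixedGalerkinSetup μ d) {C K : ℝ} (hS : S.InfSup C) (hC : 0 ≤ C) (hK : 0 ≤ K)
    {T : Lp (EuclideanSpace ℝ (Fin d)) 2 μ → H} (hT : ∀ v, ‖T v‖ ≤ K * ‖v‖)
    {e : S.V} {r : S.Q} {g : Lp ℝ 2 μ}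
    (h_flux : ∀ v : S.V, ⟪T e, T v⟫ = ⟪S.D v, r⟫) (h_div : ⟪S.D e, r⟫ = ⟪g, r⟫) :
    ‖T e‖ ≤ C * K * ‖g‖ := by
  have hr : ‖(r : Lp ℝ 2 μ)‖ ≤ C * (K * ‖T e‖) := by
    refine hS.norm_le hC r.2 (by positivity) fun v => ?_
    calc ⟪S.D v, r⟫ = ⟪T e, T v⟫ := (h_flux v).symm
      _ ≤ ‖T e‖ * ‖T v‖ := real_inner_le_norm _ _
      _ ≤ ‖T e‖ * (K * ‖(v : Lp (EuclideanSpace ℝ (Fin d)) 2 μ)‖) := by gcongr; exact hT v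
      _ = K * ‖T e‖ * ‖(v : Lp (EuclideanSpace ℝ (Fin d)) 2 μ)‖ := by ring
  have hsq : ‖T e‖ ^ 2 ≤ (C * K * ‖g‖) * ‖T e‖ :=
    calc ‖T e‖ ^ 2 = ⟪g, r⟫ := by rw [← real_inner_self_eq_norm_sq, h_flux, h_div]
      _ ≤ ‖g‖ * ‖(r : Lp ℝ 2 μ)‖ := real_inner_le_norm _ _
      _ ≤ ‖g‖ * (C * (K * ‖T e‖)) := by gcongr
      _ = (C * K * ‖g‖) * ‖T e‖ := by ring
  rcases (norm_nonneg (T e)).eq_or_lt with h0 | hpos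
  · rw [← h0]; positivity
  · exact le_of_mul_le_mul_right (by rwa [← sq]) hpos

end MixedGalerkinSetup

theorem isMGSolution_iff_inner {Ω : Type*} [MeasurableSpace Ω] {μ : Measure Ω} {d : ℕ}
    {S : MixedGalerkinSetup μ d} {κ : Ω → ℝ} {F : Type*} [NormedAddCommGroup F]
    [InnerProductSpace ℝ F]
    {T : Lp (EuclideanSpace ℝ (Fin d)) 2 μ → F}
    (hT : ∀ u v, ⟪T u, T v⟫ = ∫ x, (κ x)⁻¹ * ⟪u x, v x⟫ ∂μ)
    (f : Lp ℝ 2 μ) (u : S.V) (p : S.Q) :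
    IsMGSolution S κ f u p ↔
      (∀ v : S.V, ⟪T u, T v⟫ = ⟪S.D v, p⟫) ∧ ∀ q : S.Q, ⟪S.D u, q⟫ = ⟪f, q⟫ := by
  simp only [IsMGSolution, ← hT, L2.integral_mul_eq_inner, sub_eq_zero]

/-- Theorem 4.3, abstract form: under the inf-sup condition with constant
`C_is > 0`, if `(u₁,p₁)` and `(u₂,p₂)` are mixed Galerkin solutions for `(κ,f₁)` and
`(κ,f₂)` in the same spaces, then
`‖u₁ − u₂‖_{κ⁻¹,Ω} ≤ C_is κ_min^{-1/2} ‖f₁ − f₂‖_{L²}`. -/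
theorem stmt9 {Ω : Type*} [MeasurableSpace Ω] {μ : Measure Ω} {d : ℕ}
    (S : MixedGalerkinSetup μ d) (C_is : ℝ) (hC_is : 0 < C_is)
    (hinfsup : ∀ q : Lp ℝ 2 μ, q ∈ S.Q →
      ‖q‖ ≤ C_is * ⨆ v : {v : S.V // v ≠ 0},
        (∫ x, (S.D v.1) x * q x ∂μ) /
          Real.sqrt (‖(v.1 : Lp (EuclideanSpace ℝ (Fin d)) 2 μ)‖ ^ 2 + ‖S.D v.1‖ ^ 2))
    (κ : Ω → ℝ) (hκ : Measurable κ)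
    (κ_min : ℝ) (hκ_min : 0 < κ_min) (hκ_ae : ∀ᵐ x ∂μ, κ_min ≤ κ x)
    (f₁ f₂ : Lp ℝ 2 μ) (u₁ : S.V) (p₁ : S.Q) (u₂ : S.V) (p₂ : S.Q)
    (hsol₁ : IsMGSolution S κ f₁ u₁ p₁) (hsol₂ : IsMGSolution S κ f₂ u₂ p₂) :
    Real.sqrt (∫ x, (κ x)⁻¹ * ‖(u₁ : Lp (EuclideanSpace ℝ (Fin d)) 2 μ) x
        - (u₂ : Lp (EuclideanSpace ℝ (Fin d)) 2 μ) x‖ ^ 2 ∂μ)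
      ≤ C_is * (Real.sqrt κ_min)⁻¹ * ‖f₁ - f₂‖ := by
  have hw : AEStronglyMeasurable (fun x => (κ x)⁻¹) μ := hκ.inv.aestronglyMeasurable
  have hw0 : ∀ᵐ x ∂μ, 0 ≤ (κ x)⁻¹ := hκ_ae.mono fun x hx => inv_nonneg.2 (hκ_min.le.trans hx)
  have hwc : ∀ᵐ x ∂μ, (κ x)⁻¹ ≤ κ_min⁻¹ := hκ_ae.mono fun x hx => inv_anti₀ hκ_min hx
  obtain ⟨T, hT⟩ :=
    L2.exists_clm_inner_eq_integral_weight (E := EuclideanSpace ℝ (Fin d)) hw hw0 hwc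
  have hT_norm : ∀ v, ‖T v‖ ≤ (√κ_min)⁻¹ * ‖v‖ := by
    simpa only [Real.sqrt_inv] using L2.norm_le_of_inner_eq_integral_weight hw hw0 hwc hT
  rw [isMGSolution_iff_inner hT] at hsol₁ hsol₂
  have hdiff : ∫ x, (κ x)⁻¹ * ‖(u₁ : Lp (EuclideanSpace ℝ (Fin d)) 2 μ) x
        - (u₂ : Lp (EuclideanSpace ℝ (Fin d)) 2 μ) x‖ ^ 2 ∂μ
      = ∫ x, (κ x)⁻¹ * ‖((u₁ - u₂ : S.V) : Lp (EuclideanSpace ℝ (Fin d)) 2 μ) x‖ ^ 2 ∂μ :=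
    integral_congr_ae <| (Lp.coeFn_sub (u₁ : Lp (EuclideanSpace ℝ (Fin d)) 2 μ) u₂).mono
      fun x hx => by simp only [Submodule.coe_sub, hx, Pi.sub_apply]
  rw [hdiff, ← L2.norm_eq_sqrt_integral_weight hT]
  refine S.norm_le_of_infSup hinfsup hC_is.le (by positivity) hT_norm (r := p₁ - p₂) ?_ ?_
  · intro v
    simp only [Submodule.coe_sub, map_sub, inner_sub_left, inner_sub_right, hsol₁.1, hsol₂.1]
  · simp only [map_sub, inner_sub_left, hsol₁.2, hsol₂.2]
end
end
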